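/- arXiv:2201.12009 — 2 statements merged into one kernel-verified Lean document; each statement's English description precedes it below -/
import Mathlib

section
/- For i ≥ 1, the identity ∑_{s=0}^{i-1} (2i-2s+2)(s-1)(2i-2s-1)(2i-2s+1)·C(2i-1, s-1) = (4i³ - 5i² + 3i - 2)·C(2i-1, i) - (8i² - 12i + 4)·2^{2i-2} holds, where C(2i-1, -1) := 0 and the summand for s = 0 vanishes accordingly. -/
/-!
Put `n = 2i - 1` and `t = s - 1`. The summand becomes `P(t) C(n, t)` with
`P(t) = (n + 1 - 2t) t (n - 2t) (n - 2t - 2)`, and the ratio `C(n, t+1) / C(n, t) = (n - t) / (t + 1)`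
lets one write `P(t) C(n, t) = F(t+1) - F(t) - 2n(n-1) C(n, t)` for `F(t) = R(t) C(n, t)` with an
explicit quartic `R` vanishing at `0`. The sum therefore telescopes to `F(i-1)` minus a multiple of
the half row sum `∑_{t < i-1} C(2i-1, t) = 4^(i-1) - C(2i-1, i-1)`.
-/

open Finset

theorem Nat.cast_choose_succ_mul {R : Type*} [CommRing R] (n t : ℕ) :
    (n.choose (t + 1) : R) * (t + 1) = n.choose t * (n - t) := by
  rcases le_or_gt t n with ht | ht
  · have h := congrArg (Nat.cast : ℕ → R) (Nat.choose_succ_right_eq n t)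
    push_cast [Nat.cast_sub ht] at h
    exact h
  · simp [Nat.choose_eq_zero_of_lt ht, Nat.choose_eq_zero_of_lt (ht.trans (Nat.lt_succ_self t))]

theorem sum_range_quartic_mul_choose {R : Type*} [CommRing R] (n m : ℕ) :
    ∑ t ∈ range m, ((n : R) + 1 - 2 * t) * t * (n - 2 * t) * (n - 2 * t - 2) * n.choose t
      = m * (4 * m ^ 3 - (4 * n + 4) * m ^ 2 + (n ^ 2 + 6 * n - 4) * m + 2 - n ^ 2) * n.choose m
        - 2 * n * (n - 1) * ∑ t ∈ range m, (n.choose t : R) := by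
  induction m with
  | zero => simp
  | succ m ih =>
    rw [sum_range_succ, sum_range_succ, ih]
    push_cast
    linear_combination
      -(4 * (m + 1 : R) ^ 3 - (4 * n + 4) * (m + 1) ^ 2 + (n ^ 2 + 6 * n - 4) * (m + 1) + 2 - n ^ 2)
        * Nat.cast_choose_succ_mul (R := R) n m

theorem caseI_identity3 (i : ℕ) (hi : 1 ≤ i) :
    ∑ s ∈ Finset.range i,
        ((2 * (i : ℚ) - 2 * s + 2) * ((s : ℚ) - 1)
          * (2 * (i : ℚ) - 2 * s - 1) * (2 * (i : ℚ) - 2 * s + 1)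
          * (if s = 0 then 0 else ((2 * i - 1).choose (s - 1) : ℚ)))
      = (4 * (i : ℚ) ^ 3 - 5 * (i : ℚ) ^ 2 + 3 * i - 2) * ((2 * i - 1).choose i : ℚ)
        - (8 * (i : ℚ) ^ 2 - 12 * i + 4) * 2 ^ (2 * i - 2) := by
  obtain ⟨j, rfl⟩ := Nat.exists_eq_add_of_le' hi
  have half_row : ∑ t ∈ range j, ((2 * j + 1).choose t : ℚ) = 4 ^ j - (2 * j + 1).choose j := by
    have h : ∑ t ∈ range (j + 1), ((2 * j + 1).choose t : ℚ) = 4 ^ j := by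
      exact_mod_cast Nat.sum_range_choose_halfway j
    rw [sum_range_succ] at h
    linear_combination h
  have telescoped := sum_range_quartic_mul_choose (R := ℚ) (2 * j + 1) j
  rw [show 2 * (j + 1) - 1 = 2 * j + 1 by omega, show 2 * (j + 1) - 2 = 2 * j by omega,
    sum_range_succ', Nat.choose_symm_half, pow_mul]
  simp only [Nat.succ_ne_zero, if_false, Nat.add_sub_cancel, half_row] at telescoped ⊢
  push_cast at telescoped ⊢
  ring_nf at telescoped ⊢
  linear_combination telescoped
end

section
/- For i ≥ 1, the identity 32·∑_{s=0}^{i-1} (i-s-1)(2i-2s-1)(i-s)·C(2i-1, s) = 32·i·(i-1)·C(2i-1, i) holds; equivalently ∑_{s=0}^{i-1} (i-s-1)(i-s)(2i-2s-1)·C(2i-1, s) = i(i-1)·C(2i-1, i). -/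
open Finset

/-! The summand is a discrete derivative: with `n = 2i - 1` and
`f s = s² - 2is + i² + i - 1`, it equals `C(n,s) ((n - s) f(s+1) - s f(s))`, which telescopes
because `(s + 1) C(n, s+1) = (n - s) C(n, s)`; the boundary term is `i f(i) C(n,i)` with
`f(i) = i - 1`. -/

theorem Nat.cast_choose_succ_mul_succ {R : Type*} [CommRing R] (n k : ℕ) :
    (n.choose (k + 1) : R) * (k + 1) = n.choose k * (n - k) := by
  rcases le_or_gt k n with hkn | hnk
  · have h := congrArg (Nat.cast (R := R)) (Nat.choose_succ_right_eq n k)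
    push_cast [Nat.cast_sub hkn] at h
    exact h
  · simp [Nat.choose_eq_zero_of_lt hnk, Nat.choose_eq_zero_of_lt (hnk.trans k.lt_succ_self)]

theorem sum_range_choose_mul_sub_eq {R : Type*} [CommRing R] (f : ℕ → R) (n m : ℕ) :
    ∑ s ∈ range m, (n.choose s : R) * ((n - s) * f (s + 1) - s * f s)
      = m * f m * n.choose m := by
  induction m with
  | zero => simp
  | succ m ih =>
    rw [sum_range_succ, ih]
    push_cast
    linear_combination -f (m + 1) * Nat.cast_choose_succ_mul_succ (R := R) n m

theorem caseII_identity_general (i : ℕ) :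
    32 * ∑ s ∈ Finset.range i,
        (((i : ℚ) - s - 1) * (2 * (i : ℚ) - 2 * s - 1) * ((i : ℚ) - s)
          * ((2 * i - 1).choose s : ℚ))
      = 32 * (i : ℚ) * ((i : ℚ) - 1) * ((2 * i - 1).choose i : ℚ)
    ∧ ∑ s ∈ Finset.range i,
        (((i : ℚ) - s - 1) * ((i : ℚ) - s) * (2 * (i : ℚ) - 2 * s - 1)
          * ((2 * i - 1).choose s : ℚ))
      = (i : ℚ) * ((i : ℚ) - 1) * ((2 * i - 1).choose i : ℚ) := by
  have key : ∑ s ∈ range i, (((i : ℚ) - s - 1) * ((i : ℚ) - s) * (2 * (i : ℚ) - 2 * s - 1)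
      * ((2 * i - 1).choose s : ℚ)) = (i : ℚ) * ((i : ℚ) - 1) * ((2 * i - 1).choose i : ℚ) := by
    rcases i.eq_zero_or_pos with rfl | hi
    · simp
    have hn : ((2 * i - 1 : ℕ) : ℚ) = 2 * i - 1 := by
      rw [Nat.cast_sub (by omega)]
      push_cast
      ring
    have h := sum_range_choose_mul_sub_eq
      (fun s : ℕ => (s : ℚ) ^ 2 - 2 * i * s + i ^ 2 + i - 1) (2 * i - 1) i
    rw [hn] at h
    push_cast at h
    convert h using 1
    · exact sum_congr rfl fun s _ => by ring
    · ring
  refine ⟨?_, key⟩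
  have reorder : ∑ s ∈ range i, (((i : ℚ) - s - 1) * (2 * (i : ℚ) - 2 * s - 1) * ((i : ℚ) - s)
      * ((2 * i - 1).choose s : ℚ)) = ∑ s ∈ range i, (((i : ℚ) - s - 1) * ((i : ℚ) - s)
      * (2 * (i : ℚ) - 2 * s - 1) * ((2 * i - 1).choose s : ℚ)) :=
    sum_congr rfl fun s _ => by ring
  linear_combination 32 * reorder + 32 * key

theorem caseII_identity (i : ℕ) (hi : 1 ≤ i) :
    32 * ∑ s ∈ Finset.range i,
        (((i : ℚ) - s - 1) * (2 * (i : ℚ) - 2 * s - 1) * ((i : ℚ) - s)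
          * ((2 * i - 1).choose s : ℚ))
      = 32 * (i : ℚ) * ((i : ℚ) - 1) * ((2 * i - 1).choose i : ℚ)
    ∧ ∑ s ∈ Finset.range i,
        (((i : ℚ) - s - 1) * ((i : ℚ) - s) * (2 * (i : ℚ) - 2 * s - 1)
          * ((2 * i - 1).choose s : ℚ))
      = (i : ℚ) * ((i : ℚ) - 1) * ((2 * i - 1).choose i : ℚ) :=
  caseII_identity_general i
end
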